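/- arXiv:1910.04094 — 2 statements merged into one kernel-verified Lean document; each statement's English description precedes it below -/
import Mathlib

section
/- Let ν₁, ..., ν_N > 0 with harmonic mean ν = N/(∑ 1/ν_j), and assume max_{1≤i≤N} (1 − ν_i/ν)² < 1/2. Then there exist ε₀ ∈ (0,1) and λ ∈ (1/(2ε₀), 1) such that for every i = 1, ..., N, 1/(2λε₀) < (1−λ)ε₀ / (1 − ν_i/ν)². -/
open Finset

theorem exists_eps_lambda_of_viscosity_assumption (N : ℕ) (hN : 1 ≤ N)
    (ν : Fin N → ℝ) (hν : ∀ i, 0 < ν i) (νbar : ℝ)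
    (hνbar : νbar = N / ∑ j, (ν j)⁻¹)
    (hkey : ∀ i, (1 - ν i / νbar) ^ 2 < 1 / 2) :
    ∃ ε₀ lam : ℝ, 0 < ε₀ ∧ ε₀ < 1 ∧ 1 / (2 * ε₀) < lam ∧ lam < 1 ∧
      ∀ i, (1 / (2 * lam * ε₀)) * (1 - ν i / νbar) ^ 2 < (1 - lam) * ε₀ := by
  have hne : (Finset.univ : Finset (Fin N)).Nonempty := by
    have : NeZero N := ⟨by omega⟩
    exact Finset.univ_nonempty
  set f : Fin N → ℝ := fun i => (1 - ν i / νbar) ^ 2 with hf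
  set M : ℝ := Finset.sup' Finset.univ hne f with hM
  have hMlt : M < 1 / 2 := by
    rw [hM, Finset.sup'_lt_iff]
    intro i _
    exact hkey i
  have hMle : ∀ i, f i ≤ M := fun i => Finset.le_sup' f (Finset.mem_univ i)
  have hM0 : 0 ≤ M := le_trans (sq_nonneg _) (hMle ⟨0, by omega⟩)
  set s : ℝ := (1 / 2 - M) / 4 with hs
  have hs0 : 0 < s := by simp [hs]; linarith
  have hs8 : s ≤ 1 / 8 := by simp [hs]; linarith
  refine ⟨1 - s, 1 / 2 + s, by linarith, by linarith, ?_, by linarith, ?_⟩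
  · rw [div_lt_iff₀ (by linarith)]
    nlinarith
  · intro i
    have hfi : f i ≤ M := hMle i
    have hpos : 0 < 2 * (1 / 2 + s) * (1 - s) := by nlinarith
    rw [div_mul_eq_mul_div, one_mul, div_lt_iff₀ hpos]
    have hMs : M = 1 / 2 - 4 * s := by rw [hs] at *; linarith
    have hfi2 : (1 - ν i / νbar) ^ 2 ≤ 1 / 2 - 4 * s := by rw [← hMs]; exact hfi
    nlinarith [hs0, hs8, mul_pos hs0 hs0, mul_pos (mul_pos hs0 hs0) hs0]
end

section
/- Let E, D : [0, ∞) → [0, ∞) with E continuously differentiable and D continuous, and suppose there are constants C > 0 and a continuous nondecreasing function F : [0,∞) → [0,∞) such that E'(t) + 2D(t) ≤ C F(E(t)) D(t) for all t. If C F(E(0)) ≤ 1 and E is continuous, then E(t) + ∫₀ᵗ D(s) ds ≤ E(0) for all t ≥ 0. -/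
open Set intervalIntegral

theorem global_energy_bound (E D E' F : ℝ → ℝ) (C : ℝ) (hC : 0 < C)
    (hEnn : ∀ t, 0 ≤ t → 0 ≤ E t) (hDnn : ∀ t, 0 ≤ t → 0 ≤ D t)
    (hE' : ∀ t, 0 ≤ t → HasDerivAt E (E' t) t)
    (hE'cont : ContinuousOn E' (Ici 0))
    (hDcont : ContinuousOn D (Ici 0))
    (hFcont : Continuous F) (hFmono : Monotone F) (hFnn : ∀ x, 0 ≤ x → 0 ≤ F x)
    (hineq : ∀ t, 0 ≤ t → E' t + 2 * D t ≤ C * F (E t) * D t)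
    (hsmall : C * F (E 0) ≤ 1) :
    ∀ t, 0 ≤ t → E t + ∫ s in (0 : ℝ)..t, D s ≤ E 0 := by
  have hEcont : ContinuousOn E (Ici 0) := fun x hx =>
    (hE' x hx).continuousAt.continuousWithinAt
  have hgcont : ContinuousOn (fun u => C * F (E u)) (Ici 0) :=
    continuousOn_const.mul (hFcont.comp_continuousOn hEcont)
  -- Step A : E t ≤ E 0 for all t ≥ 0
  have key : ∀ t, 0 ≤ t → E t ≤ E 0 := by
    intro t ht
    by_contra hcon
    push_neg at hcon
    have ht0 : 0 < t := by
      rcases ht.lt_or_eq with h | h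
      · exact h
      · exfalso; rw [← h] at hcon; exact lt_irrefl _ hcon
    set S : Set ℝ := {u | u ∈ Icc 0 t ∧ E u ≤ E 0} with hSdef
    have h0S : (0:ℝ) ∈ S := ⟨⟨le_rfl, ht⟩, le_rfl⟩
    have hbdd : BddAbove S := ⟨t, fun u hu => hu.1.2⟩
    have hclosed : IsClosed S := by
      have : S = Icc 0 t ∩ E ⁻¹' Iic (E 0) := by
        ext u; simp [hSdef, and_assoc]
      rw [this]
      exact (hEcont.mono (fun x hx => hx.1)).preimage_isClosed_of_isClosed
        isClosed_Icc isClosed_Iic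
    set u₀ := sSup S with hu₀def
    have hu₀S : u₀ ∈ S := hclosed.csSup_mem ⟨0, h0S⟩ hbdd
    have hu₀0 : 0 ≤ u₀ := hu₀S.1.1
    have hu₀t : u₀ < t := by
      rcases hu₀S.1.2.lt_or_eq with h | h
      · exact h
      · exfalso; rw [h] at hu₀S; exact absurd hu₀S.2 (not_le.2 hcon)
    have hg2 : C * F (E u₀) < 2 := by
      have h1 : C * F (E u₀) ≤ C * F (E 0) :=
        mul_le_mul_of_nonneg_left (hFmono hu₀S.2) hC.le
      linarith
    have hmem : (fun u => C * F (E u)) ⁻¹' Iio 2 ∈ nhdsWithin u₀ (Ici 0) :=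
      hgcont u₀ hu₀0 (Iio_mem_nhds hg2)
    rcases Metric.mem_nhdsWithin_iff.mp hmem with ⟨ε, hε, hball⟩
    set u₁ := min (u₀ + ε / 2) t with hu₁def
    have hu₀u₁ : u₀ < u₁ := lt_min (by linarith) hu₀t
    have hu₁t : u₁ ≤ t := min_le_right _ _
    have hIccsub : Icc u₀ u₁ ⊆ Ici 0 := fun x hx => le_trans hu₀0 hx.1
    have hsmall2 : ∀ x ∈ Icc u₀ u₁, C * F (E x) < 2 := by
      intro x hx
      apply hball
      constructor
      · have hxu : x ≤ u₀ + ε / 2 := le_trans hx.2 (min_le_left _ _)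
        have : |x - u₀| < ε := by
          rw [abs_of_nonneg (by linarith [hx.1])]
          linarith
        simpa [Metric.mem_ball, Real.dist_eq] using this
      · exact hIccsub hx
    have hanti : AntitoneOn E (Icc u₀ u₁) := by
      apply antitoneOn_of_deriv_nonpos (convex_Icc _ _) (hEcont.mono hIccsub)
      · intro x hx
        rw [interior_Icc] at hx
        exact ((hE' x (le_trans hu₀0 hx.1.le)).differentiableAt).differentiableWithinAt
      · intro x hx
        rw [interior_Icc] at hx
        have hx0 : 0 ≤ x := le_trans hu₀0 hx.1.le
        rw [(hE' x hx0).deriv]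
        have h1 := hineq x hx0
        have h2 : C * F (E x) < 2 := hsmall2 x ⟨hx.1.le, hx.2.le⟩
        nlinarith [hDnn x hx0]
    have hEu₁ : E u₁ ≤ E 0 :=
      le_trans (hanti ⟨le_rfl, hu₀u₁.le⟩ ⟨hu₀u₁.le, le_rfl⟩ hu₀u₁.le) hu₀S.2
    have hu₁S : u₁ ∈ S := ⟨⟨le_trans hu₀0 hu₀u₁.le, hu₁t⟩, hEu₁⟩
    exact absurd (le_csSup hbdd hu₁S) (not_le.2 hu₀u₁)
  -- Step B
  intro t ht
  have hIcc : Icc (0:ℝ) t ⊆ Ici 0 := fun x hx => hx.1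
  have huIcc : uIcc (0:ℝ) t = Icc 0 t := uIcc_of_le ht
  have hE'int : IntervalIntegrable E' MeasureTheory.volume 0 t :=
    ContinuousOn.intervalIntegrable (by rw [huIcc]; exact hE'cont.mono hIcc)
  have hDint : IntervalIntegrable D MeasureTheory.volume 0 t :=
    ContinuousOn.intervalIntegrable (by rw [huIcc]; exact hDcont.mono hIcc)
  have hFTC : ∫ s in (0:ℝ)..t, E' s = E t - E 0 :=
    integral_eq_sub_of_hasDerivAt
      (fun x hx => hE' x (by rw [huIcc] at hx; exact hx.1)) hE'int
  have hmono : ∫ s in (0:ℝ)..t, D s ≤ ∫ s in (0:ℝ)..t, (-E' s) := by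
    apply integral_mono_on ht hDint hE'int.neg
    intro x hx
    simp only [Pi.neg_apply]
    have hx0 : 0 ≤ x := hx.1
    have h1 := hineq x hx0
    have h2 : C * F (E x) ≤ 1 :=
      le_trans (mul_le_mul_of_nonneg_left (hFmono (key x hx0)) hC.le) hsmall
    nlinarith [hDnn x hx0]
  have hnegint : ∫ s in (0:ℝ)..t, (-E' s) = E 0 - E t := by
    rw [intervalIntegral.integral_neg, hFTC]; ring
  linarith [hmono, hnegint.le, hnegint.ge]
end
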